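/- Let ε : E → F be a homomorphism of finitely generated free abelian groups. There exists a unique endomorphism d of bidegree (-1, 1) of the bigraded algebra Kos(ε) = Γ(E) ⊗ ⋀(F) satisfying: (1) d(x·x') = (dx)·x' + (-1)^q x·(dx') for x homogeneous of bidegree (p, q); (2) d(γ_k(x) ⊗ 1) = γ_{k-1}(x) ⊗ ε(x) for x ∈ E; (3) d(1 ⊗ y) = 0 for y ∈ F. -/

import Mathlib

/-!
STATEMENT 1: Let `ε : E → F` be a homomorphism of finitely generated free abelian
groups.  There exists a unique endomorphism `d` of bidegree `(-1, 1)` of the bigraded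
algebra `Kos(ε) = Γ(E) ⊗ ⋀(F)` satisfying:
(1) `d(x·x') = (dx)·x' + (-1)^q x·(dx')` for `x` homogeneous of bidegree `(p, q)`;
(2) `d(γ_k(x) ⊗ 1) = γ_{k-1}(x) ⊗ ε(x)` for `x ∈ E`;
(3) `d(1 ⊗ y) = 0` for `y ∈ F`.

We realize `E = ι → ℤ`, `F = κ → ℤ` (`ι`, `κ` finite), the divided power algebra
`Γ(E)` inside `S(E ⊗ ℚ) = MvPolynomial ι ℚ` (with `γ_k(x) = (Σ xᵢ Xᵢ)^k / k!`), and
`Kos(ε)` as the bigraded subalgebra of `MvPolynomial ι ℚ ⊗[ℤ] ⋀(F)` whose bidegree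
`(p,q)` part `Hsub p q` is spanned by `Γ_p(E) ⊗ ⋀^q(F)`.  Uniqueness is asserted on
all of `Kos(ε) = ⊕_{p,q} Hsub p q`.
-/

open scoped TensorProduct

noncomputable section

variable (ι κ : Type*) [Fintype ι] [Fintype κ] [DecidableEq ι]

/-- the ambient algebra `S(E ⊗ ℚ) ⊗ ⋀(F)` containing the Koszul bigraded algebra -/
abbrev KosAmbient := TensorProduct ℤ (MvPolynomial ι ℚ) (ExteriorAlgebra ℤ (κ → ℤ))

variable {ι κ}

/-- the divided power `γ_k(x) = x^k/k!` in `S(E ⊗ ℚ)` -/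
def gammaDP (k : ℕ) (x : ι → ℤ) : MvPolynomial ι ℚ :=
  ((k.factorial : ℚ)⁻¹) • (∑ i, (x i : ℚ) • MvPolynomial.X i) ^ k

/-- the `m`-th divided power module `Γ_m(K)` of a subgroup `K ⊆ E`, spanned by the
products `γ_{n_1}(x_1) ⋯ γ_{n_r}(x_r)` with `x_j ∈ K` and `Σ n_j = m`. -/
def GammaOf (K : Submodule ℤ (ι → ℤ)) (m : ℕ) : Submodule ℤ (MvPolynomial ι ℚ) :=
  Submodule.span ℤ {z | ∃ l : List (ℕ × (ι → ℤ)),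
    (∀ pr ∈ l, pr.2 ∈ K) ∧ (l.map Prod.fst).sum = m ∧
    z = (l.map fun pr => gammaDP pr.1 pr.2).prod}

/-- the `q`-th exterior power `⋀^q F` inside `⋀(F)` -/
def extPow (κ : Type*) (q : ℕ) : Submodule ℤ (ExteriorAlgebra ℤ (κ → ℤ)) :=
  (LinearMap.range (ExteriorAlgebra.ι ℤ : (κ → ℤ) →ₗ[ℤ] ExteriorAlgebra ℤ (κ → ℤ))) ^ q

/-- the bidegree `(p,q)` component `Γ_p(E) ⊗ ⋀^q(F)` of `Kos(ε)` -/
def Hsub (ι κ : Type*) [Fintype ι] (p q : ℕ) : Submodule ℤ (KosAmbient ι κ) :=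
  Submodule.span ℤ {a | ∃ g ∈ GammaOf (⊤ : Submodule ℤ (ι → ℤ)) p,
    ∃ y ∈ extPow κ q, a = g ⊗ₜ[ℤ] y}

/-- the axioms (bidegree `(-1,1)`, graded Leibniz rule, values on the generators) for
the Koszul differential -/
def KosDiffAxioms (ε : (ι → ℤ) →ₗ[ℤ] (κ → ℤ))
    (d : KosAmbient ι κ →ₗ[ℤ] KosAmbient ι κ) : Prop :=
  -- `d` has bidegree `(-1, 1)`
  (∀ p q : ℕ, ∀ x ∈ Hsub ι κ p q, d x ∈ Hsub ι κ (p - 1) (q + 1)) ∧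
  -- (1) graded Leibniz rule for `x` homogeneous of bidegree `(p,q)`
  (∀ p q : ℕ, ∀ x ∈ Hsub ι κ p q, ∀ x' : KosAmbient ι κ,
    d (x * x') = d x * x' + ((-1 : ℤ)) ^ q • (x * d x')) ∧
  -- (2) `d(γ_k(x) ⊗ 1) = γ_{k-1}(x) ⊗ ε(x)`
  (∀ k : ℕ, 1 ≤ k → ∀ x : ι → ℤ,
    d (gammaDP k x ⊗ₜ[ℤ] 1) = gammaDP (k - 1) x ⊗ₜ[ℤ] ExteriorAlgebra.ι ℤ (ε x)) ∧
  -- (3) `d(1 ⊗ y) = 0`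
  (∀ y : κ → ℤ,
    d ((1 : MvPolynomial ι ℚ) ⊗ₜ[ℤ] ExteriorAlgebra.ι ℤ y) = 0)

end

/-!
The differential is `d = ∑ᵢ ∂/∂Xᵢ ⊗ (ε(eᵢ) ∧ ·)`. Since `∂ᵢ γ_k(x) = xᵢ γ_{k-1}(x)`, the partial
derivatives map `Γ_p` into `Γ_{p-1}`, and `d γ_k(x) = γ_{k-1}(x) ⊗ ∑ᵢ xᵢ ε(eᵢ) = γ_{k-1}(x) ⊗ ε(x)`;
the sign in the Leibniz rule is the sign of moving `ε(eᵢ)` past an element of `⋀^q`.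
For uniqueness, the difference of two such differentials is again a graded derivation; it
vanishes on the algebra generators `γ_k(x) ⊗ 1` and `1 ⊗ y`, hence on all products of them,
and these span every component `Γ_p ⊗ ⋀^q`.
-/

open MvPolynomial TensorProduct

section DividedPowers

variable {ι : Type*} [Fintype ι]

lemma gammaDP_zero (x : ι → ℤ) : gammaDP 0 x = 1 := by
  simp [gammaDP]

lemma one_mem_GammaOf (K : Submodule ℤ (ι → ℤ)) : (1 : MvPolynomial ι ℚ) ∈ GammaOf K 0 :=
  Submodule.subset_span ⟨[], by simp, rfl, rfl⟩

lemma gammaDP_mem_GammaOf {K : Submodule ℤ (ι → ℤ)} (k : ℕ) {x : ι → ℤ} (hx : x ∈ K) :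
    gammaDP k x ∈ GammaOf K k :=
  Submodule.subset_span ⟨[(k, x)], by simpa using hx, by simp, by simp⟩

lemma GammaOf_mul_le (K : Submodule ℤ (ι → ℤ)) (m n : ℕ) :
    GammaOf K m * GammaOf K n ≤ GammaOf K (m + n) := by
  rw [GammaOf, GammaOf, Submodule.span_mul_span]
  refine Submodule.span_mono ?_
  rintro _ ⟨_, ⟨l₁, h₁, rfl, rfl⟩, _, ⟨l₂, h₂, rfl, rfl⟩, rfl⟩
  refine ⟨l₁ ++ l₂, fun pr hpr => ?_, by simp, by simp⟩
  rcases List.mem_append.mp hpr with h | h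
  exacts [h₁ pr h, h₂ pr h]

lemma mul_mem_GammaOf {K : Submodule ℤ (ι → ℤ)} {m n : ℕ} {a b : MvPolynomial ι ℚ}
    (ha : a ∈ GammaOf K m) (hb : b ∈ GammaOf K n) : a * b ∈ GammaOf K (m + n) :=
  GammaOf_mul_le K m n (Submodule.mul_mem_mul ha hb)

/-- `Γ_{m-1}(K)`, with `Γ_{-1}(K) = 0` rather than the `Γ_0(K)` that truncated subtraction
would give. -/
noncomputable def GammaOfPred (K : Submodule ℤ (ι → ℤ)) : ℕ → Submodule ℤ (MvPolynomial ι ℚ)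
  | 0 => ⊥
  | m + 1 => GammaOf K m

lemma GammaOfPred_le (K : Submodule ℤ (ι → ℤ)) (m : ℕ) :
    GammaOfPred K m ≤ GammaOf K (m - 1) := by
  cases m with
  | zero => exact bot_le
  | succ m => exact le_rfl

lemma mul_mem_GammaOfPred {K : Submodule ℤ (ι → ℤ)} {m n : ℕ} {a b : MvPolynomial ι ℚ}
    (ha : a ∈ GammaOf K m) (hb : b ∈ GammaOfPred K n) : a * b ∈ GammaOfPred K (m + n) := by
  cases n with
  | zero =>
    rw [GammaOfPred, Submodule.mem_bot] at hb
    rw [hb, mul_zero]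
    exact zero_mem _
  | succ n => exact mul_mem_GammaOf ha hb

lemma pderiv_linearCombination_X (i : ι) (x : ι → ℤ) :
    pderiv i (∑ j, (x j : ℚ) • X j : MvPolynomial ι ℚ) = C (x i : ℚ) := by
  classical
  simp [pderiv_X, Pi.single_apply, ← C_mul']

lemma pderiv_gammaDP_succ (i : ι) (k : ℕ) (x : ι → ℤ) :
    pderiv i (gammaDP (k + 1) x) = (x i : ℚ) • gammaDP k x := by
  have hk : ((k + 1).factorial : ℚ)⁻¹ * (k + 1 : ℕ) = (k.factorial : ℚ)⁻¹ := by
    rw [Nat.factorial_succ, Nat.cast_mul, mul_inv, mul_comm, ← mul_assoc,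
      mul_inv_cancel₀ (by positivity), one_mul]
  rw [gammaDP, gammaDP, Derivation.map_smul, Derivation.leibniz_pow, pderiv_linearCombination_X,
    Nat.add_sub_cancel, ← hk]
  simp only [smul_eq_C_mul, nsmul_eq_mul, smul_eq_mul, ← map_natCast (C : ℚ →+* _), map_mul]
  ring

lemma pderiv_gammaDP_mem_GammaOfPred {K : Submodule ℤ (ι → ℤ)} (i : ι) (k : ℕ) {x : ι → ℤ}
    (hx : x ∈ K) : pderiv i (gammaDP k x) ∈ GammaOfPred K k := by
  cases k with
  | zero => simp [gammaDP_zero, GammaOfPred]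
  | succ k =>
    rw [pderiv_gammaDP_succ, Int.cast_smul_eq_zsmul]
    exact Submodule.smul_mem _ _ (gammaDP_mem_GammaOf k hx)

lemma pderiv_mem_GammaOfPred {K : Submodule ℤ (ι → ℤ)} (i : ι) {m : ℕ} {g : MvPolynomial ι ℚ}
    (hg : g ∈ GammaOf K m) : pderiv i g ∈ GammaOfPred K m := by
  induction hg using Submodule.span_induction with
  | mem w hw =>
    obtain ⟨l, hl, rfl, rfl⟩ := hw
    induction l with
    | nil => simp [GammaOfPred]
    | cons pr t ih =>
      have hpr : pr.2 ∈ K := hl pr List.mem_cons_self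
      have ht : ∀ pr ∈ t, pr.2 ∈ K := fun pr h => hl pr (List.mem_cons_of_mem _ h)
      simp only [List.map_cons, List.prod_cons, List.sum_cons, Derivation.leibniz, smul_eq_mul]
      refine add_mem (mul_mem_GammaOfPred (gammaDP_mem_GammaOf _ hpr) (ih ht)) ?_
      rw [add_comm pr.1]
      exact mul_mem_GammaOfPred (Submodule.subset_span ⟨t, ht, rfl, rfl⟩)
        (pderiv_gammaDP_mem_GammaOfPred i _ hpr)
  | zero => simp
  | add a b _ _ ha hb => rw [map_add]; exact add_mem ha hb
  | smul z a _ ha => rw [map_zsmul]; exact Submodule.smul_mem _ _ ha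

end DividedPowers

section ExteriorPower

variable {R M : Type*} [CommRing R] [AddCommGroup M] [Module R M]

lemma ExteriorAlgebra.mul_ι_of_mem_exteriorPower {q : ℕ} {y : ExteriorAlgebra R M}
    (hy : y ∈ ⋀[R]^q M) (m : M) :
    y * ExteriorAlgebra.ι R m = ((-1 : ℤ) ^ q) • (ExteriorAlgebra.ι R m * y) := by
  induction q generalizing y with
  | zero =>
    rw [exteriorPower, pow_zero] at hy
    obtain ⟨r, rfl⟩ := Submodule.mem_one.mp hy
    rw [pow_zero, one_smul]
    exact Algebra.commutes r _
  | succ q ih =>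
    rw [exteriorPower, pow_succ] at hy
    refine Submodule.mul_induction_on hy ?_ fun a b ha hb => by
      rw [add_mul, ha, hb, mul_add, smul_add]
    rintro b hb _ ⟨w, rfl⟩
    have hwm : ExteriorAlgebra.ι R w * ExteriorAlgebra.ι R m =
        -(ExteriorAlgebra.ι R m * ExteriorAlgebra.ι R w) :=
      eq_neg_of_add_eq_zero_left (ExteriorAlgebra.ι_add_mul_swap w m)
    rw [mul_assoc, hwm, mul_neg, ← mul_assoc, ih hb, smul_mul_assoc, pow_succ, mul_smul,
      neg_one_zsmul, smul_neg, mul_assoc]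

end ExteriorPower

section Bigrading

variable {ι κ : Type*} [Fintype ι]

lemma one_mem_extPow : (1 : ExteriorAlgebra ℤ (κ → ℤ)) ∈ extPow κ 0 := by
  rw [extPow, pow_zero]
  exact Submodule.mem_one.mpr ⟨1, map_one _⟩

lemma ι_mem_extPow (z : κ → ℤ) : ExteriorAlgebra.ι ℤ z ∈ extPow κ 1 := by
  rw [extPow, pow_one]
  exact ⟨z, rfl⟩

lemma ι_mul_mem_extPow (z : κ → ℤ) {q : ℕ} {y : ExteriorAlgebra ℤ (κ → ℤ)}
    (hy : y ∈ extPow κ q) : ExteriorAlgebra.ι ℤ z * y ∈ extPow κ (q + 1) := by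
  rw [extPow, pow_succ']
  exact Submodule.mul_mem_mul ⟨z, rfl⟩ hy

lemma tmul_mem_Hsub {p q : ℕ} {g : MvPolynomial ι ℚ} {y : ExteriorAlgebra ℤ (κ → ℤ)}
    (hg : g ∈ GammaOf ⊤ p) (hy : y ∈ extPow κ q) : g ⊗ₜ[ℤ] y ∈ Hsub ι κ p q :=
  Submodule.subset_span ⟨g, hg, y, hy, rfl⟩

lemma one_mem_Hsub : (1 : KosAmbient ι κ) ∈ Hsub ι κ 0 0 :=
  tmul_mem_Hsub (one_mem_GammaOf ⊤) one_mem_extPow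

end Bigrading

section GradedDerivation

variable {ι κ : Type*} [Fintype ι]

def IsGradedLeibniz (d : KosAmbient ι κ →ₗ[ℤ] KosAmbient ι κ) : Prop :=
  ∀ p q : ℕ, ∀ x ∈ Hsub ι κ p q, ∀ x' : KosAmbient ι κ,
    d (x * x') = d x * x' + ((-1 : ℤ)) ^ q • (x * d x')

namespace IsGradedLeibniz

variable {d d₁ d₂ : KosAmbient ι κ →ₗ[ℤ] KosAmbient ι κ}

lemma sub (h₁ : IsGradedLeibniz d₁) (h₂ : IsGradedLeibniz d₂) : IsGradedLeibniz (d₁ - d₂) := by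
  intro p q x hx x'
  simp only [LinearMap.sub_apply, h₁ p q x hx x', h₂ p q x hx x', sub_mul, mul_sub, smul_sub]
  abel

lemma map_one (h : IsGradedLeibniz d) : d 1 = 0 := by
  simpa using h 0 0 1 one_mem_Hsub 1

lemma map_mul_eq_zero (h : IsGradedLeibniz d) {p q : ℕ} {x x' : KosAmbient ι κ}
    (hx : x ∈ Hsub ι κ p q) (hdx : d x = 0) (hdx' : d x' = 0) : d (x * x') = 0 := by
  rw [h p q x hx x', hdx, hdx', zero_mul, mul_zero, smul_zero, add_zero]

lemma map_one_tmul_eq_zero (h : IsGradedLeibniz d)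
    (hι : ∀ z, d ((1 : MvPolynomial ι ℚ) ⊗ₜ[ℤ] ExteriorAlgebra.ι ℤ z) = 0)
    {q : ℕ} {y : ExteriorAlgebra ℤ (κ → ℤ)} (hy : y ∈ extPow κ q) :
    d ((1 : MvPolynomial ι ℚ) ⊗ₜ[ℤ] y) = 0 := by
  induction q generalizing y with
  | zero =>
    rw [extPow, pow_zero] at hy
    obtain ⟨n, rfl⟩ := Submodule.mem_one.mp hy
    rw [Algebra.algebraMap_eq_smul_one, tmul_smul, ← Algebra.TensorProduct.one_def, map_zsmul,
      h.map_one, smul_zero]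
  | succ q ih =>
    rw [extPow, pow_succ'] at hy
    refine Submodule.mul_induction_on hy ?_ fun a b ha hb => by
      rw [tmul_add, map_add, ha, hb, add_zero]
    rintro _ ⟨z, rfl⟩ b hb
    rw [← one_mul (1 : MvPolynomial ι ℚ), ← Algebra.TensorProduct.tmul_mul_tmul]
    exact h.map_mul_eq_zero (tmul_mem_Hsub (one_mem_GammaOf ⊤) (ι_mem_extPow z)) (hι z) (ih hb)

lemma map_tmul_eq_zero (h : IsGradedLeibniz d)
    (hγ : ∀ k x, d (gammaDP k x ⊗ₜ[ℤ] (1 : ExteriorAlgebra ℤ (κ → ℤ))) = 0)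
    (hι : ∀ z, d ((1 : MvPolynomial ι ℚ) ⊗ₜ[ℤ] ExteriorAlgebra.ι ℤ z) = 0)
    {p q : ℕ} {g : MvPolynomial ι ℚ} {y : ExteriorAlgebra ℤ (κ → ℤ)}
    (hg : g ∈ GammaOf ⊤ p) (hy : y ∈ extPow κ q) : d (g ⊗ₜ[ℤ] y) = 0 := by
  induction hg using Submodule.span_induction with
  | mem w hw =>
    obtain ⟨l, -, -, rfl⟩ := hw
    induction l with
    | nil => exact h.map_one_tmul_eq_zero hι hy
    | cons pr t ih =>
      rw [List.map_cons, List.prod_cons, ← one_mul y, ← Algebra.TensorProduct.tmul_mul_tmul]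
      exact h.map_mul_eq_zero (tmul_mem_Hsub (gammaDP_mem_GammaOf pr.1 trivial) one_mem_extPow)
        (hγ _ _) ih
  | zero => rw [zero_tmul, map_zero]
  | add a b _ _ ha hb => rw [add_tmul, map_add, ha, hb, add_zero]
  | smul z a _ ha => rw [← smul_tmul', map_zsmul, ha, smul_zero]

lemma eq_zero_of_mem_Hsub (h : IsGradedLeibniz d)
    (hγ : ∀ k x, d (gammaDP k x ⊗ₜ[ℤ] (1 : ExteriorAlgebra ℤ (κ → ℤ))) = 0)
    (hι : ∀ z, d ((1 : MvPolynomial ι ℚ) ⊗ₜ[ℤ] ExteriorAlgebra.ι ℤ z) = 0)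
    {p q : ℕ} {x : KosAmbient ι κ} (hx : x ∈ Hsub ι κ p q) : d x = 0 := by
  have hle : Hsub ι κ p q ≤ LinearMap.ker d := Submodule.span_le.mpr <| by
    rintro _ ⟨g, hg, y, hy, rfl⟩
    exact h.map_tmul_eq_zero hγ hι hg hy
  exact hle hx

end IsGradedLeibniz

lemma KosDiffAxioms.eq_of_mem_Hsub [Fintype κ] [DecidableEq ι] {ε : (ι → ℤ) →ₗ[ℤ] (κ → ℤ)}
    {d₁ d₂ : KosAmbient ι κ →ₗ[ℤ] KosAmbient ι κ} (h₁ : KosDiffAxioms ε d₁)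
    (h₂ : KosDiffAxioms ε d₂) {p q : ℕ} {x : KosAmbient ι κ} (hx : x ∈ Hsub ι κ p q) :
    d₁ x = d₂ x := by
  obtain ⟨-, hL₁, hγ₁, hι₁⟩ := h₁
  obtain ⟨-, hL₂, hγ₂, hι₂⟩ := h₂
  have hL : IsGradedLeibniz (d₁ - d₂) := IsGradedLeibniz.sub hL₁ hL₂
  refine sub_eq_zero.mp (hL.eq_zero_of_mem_Hsub ?_ ?_ hx)
  · rintro (_ | k) x
    · rw [gammaDP_zero, ← Algebra.TensorProduct.one_def]
      exact hL.map_one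
    · rw [LinearMap.sub_apply, hγ₁ _ k.succ_pos x, hγ₂ _ k.succ_pos x, sub_self]
  · intro z
    rw [LinearMap.sub_apply, hι₁, hι₂, sub_self]

end GradedDerivation

section KoszulDifferential

variable {ι κ : Type*} [Fintype ι]

noncomputable def koszulDiff (ε : (ι → ℤ) →ₗ[ℤ] (κ → ℤ)) :
    KosAmbient ι κ →ₗ[ℤ] KosAmbient ι κ :=
  ∑ i, TensorProduct.map ((pderiv i).toLinearMap.restrictScalars ℤ)
    (LinearMap.mulLeft ℤ (ExteriorAlgebra.ι ℤ (ε (Pi.basisFun ℤ ι i))))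

variable (ε : (ι → ℤ) →ₗ[ℤ] (κ → ℤ))

lemma koszulDiff_tmul (f : MvPolynomial ι ℚ) (y : ExteriorAlgebra ℤ (κ → ℤ)) :
    koszulDiff ε (f ⊗ₜ[ℤ] y) =
      ∑ i, pderiv i f ⊗ₜ[ℤ] (ExteriorAlgebra.ι ℤ (ε (Pi.basisFun ℤ ι i)) * y) :=
  (LinearMap.sum_apply _ _ _).trans (Finset.sum_congr rfl fun _ _ => rfl)

lemma koszulDiff_mem_Hsub {p q : ℕ} {x : KosAmbient ι κ} (hx : x ∈ Hsub ι κ p q) :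
    koszulDiff ε x ∈ Hsub ι κ (p - 1) (q + 1) := by
  have hle : Hsub ι κ p q ≤ (Hsub ι κ (p - 1) (q + 1)).comap (koszulDiff ε) :=
    Submodule.span_le.mpr <| by
      rintro _ ⟨g, hg, y, hy, rfl⟩
      rw [SetLike.mem_coe, Submodule.mem_comap, koszulDiff_tmul]
      exact Submodule.sum_mem _ fun i _ =>
        tmul_mem_Hsub (GammaOfPred_le _ _ (pderiv_mem_GammaOfPred i hg)) (ι_mul_mem_extPow _ hy)
  exact hle hx

lemma koszulDiff_gammaDP_succ_tmul_one (k : ℕ) (x : ι → ℤ) :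
    koszulDiff ε (gammaDP (k + 1) x ⊗ₜ[ℤ] 1) =
      gammaDP k x ⊗ₜ[ℤ] ExteriorAlgebra.ι ℤ (ε x) := by
  have hεx : ε x = ∑ i, x i • ε (Pi.basisFun ℤ ι i) := by
    conv_lhs => rw [← (Pi.basisFun ℤ ι).sum_repr x]
    simp only [map_sum, map_smul, Pi.basisFun_repr]
  simp only [koszulDiff_tmul, mul_one, pderiv_gammaDP_succ, Int.cast_smul_eq_zsmul, smul_tmul,
    hεx, map_sum, map_zsmul, tmul_sum]

lemma koszulDiff_one_tmul_ι (z : κ → ℤ) :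
    koszulDiff ε ((1 : MvPolynomial ι ℚ) ⊗ₜ[ℤ] ExteriorAlgebra.ι ℤ z) = 0 := by
  simp [koszulDiff_tmul]

lemma koszulDiff_tmul_mul_tmul (g f : MvPolynomial ι ℚ) {q : ℕ} {y : ExteriorAlgebra ℤ (κ → ℤ)}
    (hy : y ∈ extPow κ q) (y' : ExteriorAlgebra ℤ (κ → ℤ)) :
    koszulDiff ε ((g ⊗ₜ[ℤ] y) * (f ⊗ₜ[ℤ] y')) =
      koszulDiff ε (g ⊗ₜ[ℤ] y) * (f ⊗ₜ[ℤ] y') +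
        ((-1 : ℤ)) ^ q • ((g ⊗ₜ[ℤ] y) * koszulDiff ε (f ⊗ₜ[ℤ] y')) := by
  simp only [Algebra.TensorProduct.tmul_mul_tmul, koszulDiff_tmul, Finset.sum_mul, Finset.mul_sum,
    Finset.smul_sum, ← Finset.sum_add_distrib]
  refine Finset.sum_congr rfl fun i _ => ?_
  rw [Derivation.leibniz, smul_eq_mul, smul_eq_mul, add_tmul, ← mul_assoc y,
    ExteriorAlgebra.mul_ι_of_mem_exteriorPower hy, smul_mul_assoc, tmul_smul, smul_smul,
    ← mul_pow, neg_one_mul, neg_neg, one_pow, one_smul, add_comm, mul_comm f, mul_assoc]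

lemma koszulDiff_isGradedLeibniz : IsGradedLeibniz (koszulDiff ε) := by
  intro p q x hx x'
  induction hx using Submodule.span_induction with
  | mem a ha =>
    obtain ⟨g, -, y, hy, rfl⟩ := ha
    induction x' using TensorProduct.induction_on with
    | zero => simp
    | tmul f y' => exact koszulDiff_tmul_mul_tmul ε g f hy y'
    | add u v hu hv =>
      rw [mul_add, map_add, hu, hv, map_add, mul_add, mul_add, smul_add]
      abel
  | zero => simp
  | add a b _ _ ha hb =>
    rw [add_mul, map_add, ha, hb, map_add, add_mul, add_mul, smul_add]
    abel
  | smul z a _ ha =>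
    rw [smul_mul_assoc, map_zsmul, ha, map_zsmul, smul_add, smul_mul_assoc, smul_comm z,
      smul_mul_assoc]

lemma koszulDiff_kosDiffAxioms [Fintype κ] [DecidableEq ι] : KosDiffAxioms ε (koszulDiff ε) := by
  refine ⟨fun _ _ _ => koszulDiff_mem_Hsub ε, koszulDiff_isGradedLeibniz ε, fun k hk x => ?_,
    koszulDiff_one_tmul_ι ε⟩
  obtain ⟨k, rfl⟩ := Nat.exists_eq_add_of_le' hk
  exact koszulDiff_gammaDP_succ_tmul_one ε k x

end KoszulDifferential

variable {ι κ : Type*} [Fintype ι] [Fintype κ] [DecidableEq ι]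

theorem statement1 (ε : (ι → ℤ) →ₗ[ℤ] (κ → ℤ)) :
    -- existence
    (∃ d : KosAmbient ι κ →ₗ[ℤ] KosAmbient ι κ, KosDiffAxioms ε d) ∧
    -- uniqueness (as an endomorphism of `Kos(ε) = ⊕_{p,q} Γ_p(E) ⊗ ⋀^q(F)`)
    (∀ d₁ d₂ : KosAmbient ι κ →ₗ[ℤ] KosAmbient ι κ,
      KosDiffAxioms ε d₁ → KosDiffAxioms ε d₂ →
      ∀ p q : ℕ, ∀ x ∈ Hsub ι κ p q, d₁ x = d₂ x) :=
  ⟨⟨koszulDiff ε, koszulDiff_kosDiffAxioms ε⟩,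
    fun _ _ h₁ h₂ _ _ _ hx => h₁.eq_of_mem_Hsub h₂ hx⟩
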